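/- arXiv:1206.6195 — 4 statements merged into one kernel-verified Lean document; each statement's English description precedes it below -/
import Mathlib

section
/- Suppose the Markov chain on Σ* := Σ × {1,...,N} with transition matrix P* := (P_A*)^r (P_B*)^s has the unique stationary distribution π*. Let π be the unique stationary distribution of P_A^r P_B^s on Σ. Then π*(x, i) = π(x)/N for all (x, i) ∈ Σ*, and moreover [π*(P_A*)^r(P_B*)^v](x,i) = [π P_A^r P_B^v](x)/N for each v = 0, 1, ..., s−1. -/
open Finset

/-- `m_i(x) := 2 x_{i-1} + x_{i+1}` (indices mod `N`). -/
def mval {N : ℕ} [NeZero N] (x : Fin N → Fin 2) (i : Fin N) : ℕ :=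
  2 * (x (i - 1)).val + (x (i + 1)).val

/-- `x^i`: the state `x` with the `i`-th coordinate flipped. -/
def flipAt {N : ℕ} [NeZero N] (x : Fin N → Fin 2) (i : Fin N) : Fin N → Fin 2 :=
  Function.update x i (1 - x i)

/-- The one-step transition matrix of Toral's cooperative Parrondo game `B`:
`P_B(x, x^i) = N⁻¹ p_{m_i(x)}` if `x_i = 0`, `N⁻¹ q_{m_i(x)}` if `x_i = 1`;
`P_B(x, x) = N⁻¹ (Σ_{i : x_i=0} q_{m_i(x)} + Σ_{i : x_i=1} p_{m_i(x)})`;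
`P_B(x, y) = 0` otherwise, where `q_m := 1 - p_m`. -/
noncomputable def PB {N : ℕ} [NeZero N] (p : ℕ → ℝ) (x y : Fin N → Fin 2) : ℝ :=
  (N : ℝ)⁻¹ *
    ((if y = x then
        ∑ i, (if x i = 0 then 1 - p (mval x i) else p (mval x i)) else 0) +
      ∑ i, if y = flipAt x i then
        (if x i = 0 then p (mval x i) else 1 - p (mval x i)) else 0)

/-- The augmented transition matrix `P_B*` on `Σ* = Σ × {1,…,N}`, tracking the state
together with the label of the next player to play:
`P_B*((x,i),(x^i,j)) = N⁻¹ p_{m_i(x)}` if `x_i = 0`, `N⁻¹ q_{m_i(x)}` if `x_i = 1`;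
`P_B*((x,i),(x,j)) = N⁻¹ q_{m_i(x)}` if `x_i = 0`, `N⁻¹ p_{m_i(x)}` if `x_i = 1`;
and `0` otherwise. -/
noncomputable def PBstar {N : ℕ} [NeZero N] (p : ℕ → ℝ)
    (a b : (Fin N → Fin 2) × Fin N) : ℝ :=
  if b.1 = flipAt a.1 a.2 then
    (N : ℝ)⁻¹ * (if a.1 a.2 = 0 then p (mval a.1 a.2) else 1 - p (mval a.1 a.2))
  else if b.1 = a.1 then
    (N : ℝ)⁻¹ * (if a.1 a.2 = 0 then 1 - p (mval a.1 a.2) else p (mval a.1 a.2))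
  else 0

lemma flipAt_ne {N : ℕ} [NeZero N] (x : Fin N → Fin 2) (i : Fin N) : flipAt x i ≠ x := by
  intro h
  have h1 := congrFun h i
  simp only [flipAt, Function.update_self] at h1
  have : ∀ a : Fin 2, 1 - a ≠ a := by decide
  exact this (x i) h1

open scoped Classical in
lemma sum_PBstar {N : ℕ} [NeZero N] (p : ℕ → ℝ) (x y : Fin N → Fin 2) (j : Fin N) :
    ∑ i, PBstar p (x, i) (y, j) = PB p x y := by
  unfold PB
  have h1 : (if y = x then
      ∑ i, (if x i = 0 then 1 - p (mval x i) else p (mval x i)) else 0) =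
      ∑ i, (if y = x then (if x i = 0 then 1 - p (mval x i) else p (mval x i)) else 0) := by
    split <;> simp
  rw [h1, ← Finset.sum_add_distrib, Finset.mul_sum]
  refine Finset.sum_congr rfl fun i _ => ?_
  unfold PBstar
  simp only
  by_cases hf : y = flipAt x i
  · have hyx : ¬ y = x := by rw [hf]; exact flipAt_ne x i
    simp only [hf, hyx, if_false, if_true, flipAt_ne x i, ite_false]
    split <;> ring
  · by_cases hyx : y = x
    · have hxf : ¬ x = flipAt x i := (flipAt_ne x i).symm
      simp only [hf, hyx, if_true, if_false, hxf, ite_false, ite_true]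
      split <;> ring
    · simp [hf, hyx]

open scoped Classical in
lemma vecMul_PBstar {N : ℕ} [NeZero N] (p : ℕ → ℝ) (g : (Fin N → Fin 2) → ℝ) :
    Matrix.vecMul (fun a => g a.1 / N) (Matrix.of (PBstar p)) =
      fun b => Matrix.vecMul g (Matrix.of (PB p)) b.1 / N := by
  funext b
  simp only [Matrix.vecMul, dotProduct, Matrix.of_apply]
  rw [Fintype.sum_prod_type, Finset.sum_div]
  refine Finset.sum_congr rfl fun x _ => ?_
  show ∑ i : Fin N, g x / ↑N * PBstar p (x, i) b = g x * PB p x b.1 / ↑N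
  rw [← Finset.mul_sum]
  have h := sum_PBstar p x b.1 b.2
  rw [(by rfl : ((b.1, b.2) : (Fin N → Fin 2) × Fin N) = b)] at h
  rw [h]
  ring

open scoped Classical in
lemma vecMul_PBstar_pow {N : ℕ} [NeZero N] (p : ℕ → ℝ) (g : (Fin N → Fin 2) → ℝ)
    (k : ℕ) :
    Matrix.vecMul (fun a => g a.1 / N) ((Matrix.of (PBstar p)) ^ k) =
      fun b => Matrix.vecMul g ((Matrix.of (PB p)) ^ k) b.1 / N := by
  induction k with
  | zero => simp [Matrix.vecMul_one]
  | succ k ih =>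
    rw [pow_succ, pow_succ, ← Matrix.vecMul_vecMul, ih, vecMul_PBstar]
    funext b
    rw [Matrix.vecMul_vecMul]

open scoped Classical in
lemma vecMul_prodform {N : ℕ} [NeZero N] (p q : ℕ → ℝ) (g : (Fin N → Fin 2) → ℝ)
    (r v : ℕ) :
    Matrix.vecMul (fun a => g a.1 / N)
        ((Matrix.of (PBstar q)) ^ r * (Matrix.of (PBstar p)) ^ v) =
      fun b => Matrix.vecMul g
        ((Matrix.of (PB q)) ^ r * (Matrix.of (PB p)) ^ v) b.1 / N := by
  rw [← Matrix.vecMul_vecMul, vecMul_PBstar_pow, vecMul_PBstar_pow]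
  funext b
  rw [Matrix.vecMul_vecMul]

open scoped Classical in
/-- Let `π*` be the unique stationary distribution of
`P* := (P_A*)^r (P_B*)^s` on `Σ* = Σ × {1,…,N}` and `π` the unique stationary
distribution of `P_A^r P_B^s` on `Σ`.  Then `π*(x,i) = π(x)/N` for all `(x,i)`, and
`[π*(P_A*)^r(P_B*)^v](x,i) = [π P_A^r P_B^v](x)/N` for each `v = 0,1,…,s−1`. -/
theorem stmt_11 {N : ℕ} [NeZero N] (hN : 3 ≤ N) (p : ℕ → ℝ)
    (hp : ∀ m ≤ 3, 0 < p m ∧ p m < 1) (r s : ℕ) (hr : 1 ≤ r) (hs : 1 ≤ s)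
    (πstar : (Fin N → Fin 2) × Fin N → ℝ)
    (hπstarnonneg : ∀ a, 0 ≤ πstar a) (hπstarsum : ∑ a, πstar a = 1)
    (hπstarstat : Matrix.vecMul πstar
      ((Matrix.of (PBstar (N := N) (fun _ => 1/2))) ^ r *
        (Matrix.of (PBstar (N := N) p)) ^ s) = πstar)
    (hπstaruniq : ∀ π' : (Fin N → Fin 2) × Fin N → ℝ,
      (∀ a, 0 ≤ π' a) → (∑ a, π' a = 1) →
      Matrix.vecMul π' ((Matrix.of (PBstar (N := N) (fun _ => 1/2))) ^ r *
        (Matrix.of (PBstar (N := N) p)) ^ s) = π' → π' = πstar)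
    (π : (Fin N → Fin 2) → ℝ)
    (hπnonneg : ∀ x, 0 ≤ π x) (hπsum : ∑ x, π x = 1)
    (hπstat : Matrix.vecMul π ((Matrix.of (PB (N := N) (fun _ => 1/2))) ^ r *
      (Matrix.of (PB (N := N) p)) ^ s) = π)
    (hπuniq : ∀ π' : (Fin N → Fin 2) → ℝ,
      (∀ x, 0 ≤ π' x) → (∑ x, π' x = 1) →
      Matrix.vecMul π' ((Matrix.of (PB (N := N) (fun _ => 1/2))) ^ r *
        (Matrix.of (PB (N := N) p)) ^ s) = π' → π' = π) :
    (∀ x : Fin N → Fin 2, ∀ i : Fin N, πstar (x, i) = π x / N) ∧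
    (∀ v : ℕ, v < s → ∀ x : Fin N → Fin 2, ∀ i : Fin N,
      Matrix.vecMul πstar ((Matrix.of (PBstar (N := N) (fun _ => 1/2))) ^ r *
        (Matrix.of (PBstar (N := N) p)) ^ v) (x, i) =
      Matrix.vecMul π ((Matrix.of (PB (N := N) (fun _ => 1/2))) ^ r *
        (Matrix.of (PB (N := N) p)) ^ v) x / N) := by
  have key : (fun a : (Fin N → Fin 2) × Fin N => π a.1 / N) = πstar := by
    apply hπstaruniq
    · intro a; exact div_nonneg (hπnonneg a.1) (Nat.cast_nonneg N)
    · rw [Fintype.sum_prod_type]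
      have h : ∀ x : Fin N → Fin 2, ∑ _i : Fin N, π x / N = π x := by
        intro x
        rw [Finset.sum_const, Finset.card_univ, Fintype.card_fin, nsmul_eq_mul]
        field_simp
      simp_rw [h]
      exact hπsum
    · rw [vecMul_prodform]
      funext b
      rw [hπstat]
  constructor
  · intro x i
    rw [← key]
  · intro v hv x i
    rw [← key, vecMul_prodform]
end

section
/- Define μ_{[1,1]}(p_0,p_3,p_1) := 5[2p_1(3 + p_0 + q_3) − 3q_0 − 5q_3] / {2(17 + 15p_0 + 4p_0p_1 + 8p_0q_3 + 4p_1p_3 + 4q_1 + 19q_3)} for (p_0,p_3,p_1) ∈ (0,1)^3, with q_m := 1−p_m. Then μ_{[1,1]}(p_0,p_3,p_1) = −μ_{[1,1]}(1−p_3, 1−p_0, 1−p_1). -/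
/-- The mean profit per turn `μ_{[1,1]}(p_0,p_3,p_1)` for the pattern `AB` with `N = 3`
players and `p_1 = p_2`, with `q_m := 1 − p_m`. -/
noncomputable def mu11 (p0 p3 p1 : ℝ) : ℝ :=
  5 * (2 * p1 * (3 + p0 + (1 - p3)) - 3 * (1 - p0) - 5 * (1 - p3)) /
    (2 * (17 + 15 * p0 + 4 * p0 * p1 + 8 * p0 * (1 - p3) + 4 * p1 * p3 +
      4 * (1 - p1) + 19 * (1 - p3)))

/-- `μ_{[1,1]}(p_0,p_3,p_1) = −μ_{[1,1]}(1−p_3, 1−p_0, 1−p_1)`. -/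
theorem stmt_14 (p0 p1 p3 : ℝ)
    (h0 : p0 ∈ Set.Ioo (0 : ℝ) 1) (h1 : p1 ∈ Set.Ioo (0 : ℝ) 1)
    (h3 : p3 ∈ Set.Ioo (0 : ℝ) 1) :
    mu11 p0 p3 p1 = -mu11 (1 - p3) (1 - p0) (1 - p1) := by
  obtain ⟨a0, b0⟩ := h0
  obtain ⟨a1, b1⟩ := h1
  obtain ⟨a3, b3⟩ := h3
  unfold mu11
  have hd : 2 * (17 + 15 * p0 + 4 * p0 * p1 + 8 * p0 * (1 - p3) + 4 * p1 * p3 +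
      4 * (1 - p1) + 19 * (1 - p3)) > 0 := by nlinarith
  have hd2 : 2 * (17 + 15 * (1 - p3) + 4 * (1 - p3) * (1 - p1) +
      8 * (1 - p3) * (1 - (1 - p0)) + 4 * (1 - p1) * (1 - p0) +
      4 * (1 - (1 - p1)) + 19 * (1 - (1 - p0))) > 0 := by nlinarith
  rw [← neg_div, div_eq_div_iff (ne_of_gt hd) (ne_of_gt hd2)]
  ring
end

section
/- For N = 3 and p_1 = p_2, the volume of the Parrondo region for the pattern [1,1], namely the set of (p_0,p_3,p_1) ∈ (0,1)^3 with (3q_0 + 5q_3)/(2(3 + p_0 + q_3)) < p_1 ≤ q_3/(p_0 + q_3) (where q_m := 1−p_m), equals (100 ln 5 + 36 ln 3 − 276 ln 2 − 9)/8. -/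
/-!
Slicing along `p₁` turns the volume into the integral over `(p₀, p₃) ∈ (0,1)²` of the positive
part of the gap between the two bounds. The gap factors as
`3 (p₃ - p₀) (1 - p₀ - p₃) / (2 (p₀ + q₃) (3 + p₀ + q₃))`, so for fixed `p₀` it is nonnegative
exactly for `p₃` between `p₀` and `1 - p₀`. Integrating it over that interval gives an elementary
function of `p₀` that changes sign at `1/2`, and integrating the absolute value of that function
over `(0,1)` gives the logarithmic closed form.
-/

open MeasureTheory Set
open scoped Interval

section OrderedRing

variable {α : Type*} [CommRing α] [LinearOrder α] [IsStrictOrderedRing α] {a b c : α}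

lemma sub_mul_sub_nonneg_of_mem_uIcc (h : c ∈ uIcc a b) : 0 ≤ (c - a) * (b - c) := by
  rcases le_total a b with hab | hab
  · rw [uIcc_of_le hab] at h
    exact mul_nonneg (sub_nonneg.2 h.1) (sub_nonneg.2 h.2)
  · rw [uIcc_of_ge hab] at h
    exact mul_nonneg_of_nonpos_of_nonpos (sub_nonpos.2 h.2) (sub_nonpos.2 h.1)

lemma sub_mul_sub_nonpos_of_notMem_uIoc (h : c ∉ Ι a b) : (c - a) * (b - c) ≤ 0 := by
  rw [uIoc, mem_Ioc, not_and_or, not_lt, not_le] at h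
  rcases h with h | h
  · nlinarith [min_le_left a b, min_le_right a b]
  · nlinarith [le_max_left a b, le_max_right a b]

end OrderedRing

theorem volume_regionBetween_Ioc_eq_lintegral {α : Type*} [MeasurableSpace α] {μ : Measure α}
    [SFinite μ] {f g : α → ℝ} {s : Set α} (hf : Measurable f) (hg : Measurable g)
    (hs : MeasurableSet s) :
    μ.prod volume {p : α × ℝ | p.1 ∈ s ∧ p.2 ∈ Ioc (f p.1) (g p.1)} =
      ∫⁻ x in s, ENNReal.ofReal (g x - f x) ∂μ := by
  rw [Measure.prod_apply (measurableSet_region_between_oc hf hg hs), ← lintegral_indicator hs]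
  refine lintegral_congr fun x => ?_
  by_cases hx : x ∈ s
  · simp only [hx, preimage, indicator_of_mem, true_and, mem_ofPred_eq, mem_Ioc]
    exact Real.volume_Ioc
  · simp [hx, preimage]

lemma setLIntegral_ofReal_eq_abs_intervalIntegral {f : ℝ → ℝ} {a b : ℝ} {s : Set ℝ}
    (hs : MeasurableSet s) (hsub : Ι a b ⊆ s) (hf : IntervalIntegrable f volume a b)
    (hpos : ∀ x ∈ Ι a b, 0 ≤ f x) (hneg : ∀ x ∈ s, x ∉ Ι a b → f x ≤ 0) :
    ∫⁻ x in s, ENNReal.ofReal (f x) = ENNReal.ofReal |∫ x in a..b, f x| := by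
  have hzero : ∫⁻ x in s \ Ι a b, ENNReal.ofReal (f x) = 0 :=
    setLIntegral_eq_zero (hs.diff measurableSet_uIoc) fun x hx =>
      ENNReal.ofReal_eq_zero.2 (hneg x hx.1 hx.2)
  rw [← lintegral_inter_add_sdiff _ s measurableSet_uIoc, hzero, add_zero,
    inter_eq_right.2 hsub, ← ofReal_integral_eq_lintegral_ofReal hf.def'
      ((ae_restrict_iff' measurableSet_uIoc).2 (ae_of_all _ hpos)),
    intervalIntegral.abs_integral_eq_abs_integral_uIoc,
    abs_of_nonneg (setIntegral_nonneg measurableSet_uIoc hpos)]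

lemma intervalIntegral_abs_eq_sub_of_nonneg_of_nonpos {f : ℝ → ℝ} {a b c : ℝ} (hab : a ≤ b)
    (hbc : b ≤ c) (hf₁ : IntervalIntegrable f volume a b) (hf₂ : IntervalIntegrable f volume b c)
    (hpos : ∀ x ∈ Ioo a b, 0 ≤ f x) (hneg : ∀ x ∈ Ioo b c, f x ≤ 0) :
    ∫ x in a..c, |f x| = (∫ x in a..b, f x) - ∫ x in b..c, f x := by
  rw [← intervalIntegral.integral_add_adjacent_intervals hf₁.abs hf₂.abs,
    intervalIntegral.integral_of_le hab, intervalIntegral.integral_of_le hab,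
    intervalIntegral.integral_of_le hbc, intervalIntegral.integral_of_le hbc,
    integral_Ioc_eq_integral_Ioo, integral_Ioc_eq_integral_Ioo, integral_Ioc_eq_integral_Ioo,
    integral_Ioc_eq_integral_Ioo, sub_eq_add_neg, ← integral_neg,
    setIntegral_congr_fun measurableSet_Ioo fun x hx => abs_of_nonneg (hpos x hx),
    setIntegral_congr_fun measurableSet_Ioo fun x hx => abs_of_nonpos (hneg x hx)]

/-- `a` and `c` stand for `p₀` and `p₃`. -/
noncomputable def parrondoLower (a c : ℝ) : ℝ :=
  (3 * (1 - a) + 5 * (1 - c)) / (2 * (3 + a + (1 - c)))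

noncomputable def parrondoUpper (a c : ℝ) : ℝ :=
  (1 - c) / (a + (1 - c))

def parrondoRegion : Set (ℝ × ℝ × ℝ) :=
  {v | (v.1 ∈ Ioo 0 1 ∧ v.2.1 ∈ Ioo 0 1 ∧ v.2.2 ∈ Ioo 0 1) ∧
    parrondoLower v.1 v.2.1 < v.2.2 ∧ v.2.2 ≤ parrondoUpper v.1 v.2.1}

noncomputable def parrondoGap (a c : ℝ) : ℝ :=
  parrondoUpper a c - parrondoLower a c

noncomputable def parrondoGapPrimitive (a c : ℝ) : ℝ :=
  (3 * (a + 1 - c) + 2 * a * Real.log (a + 1 - c) - (12 + 8 * a) * Real.log (a + 4 - c)) / 2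

noncomputable def parrondoGapIntegral (a : ℝ) : ℝ :=
  (6 * a - 3 + 2 * a * Real.log (2 * a) + (12 + 8 * a) * (Real.log 4 - Real.log (2 * a + 3))) / 2

noncomputable def parrondoGapIntegralPrimitive (t : ℝ) : ℝ :=
  (-3 * t + 3 * t ^ 2 + (12 * t + 4 * t ^ 2) * Real.log 4 + t ^ 2 * Real.log (2 * t)
      - t ^ 2 / 2 - (2 * t + 3) ^ 2 * Real.log (2 * t + 3) + (2 * t + 3) ^ 2 / 2) / 2

section Gap

variable {a c : ℝ}

lemma parrondoLower_nonneg (ha₀ : 0 ≤ a) (ha₁ : a ≤ 1) (hc : c ≤ 1) :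
    0 ≤ parrondoLower a c :=
  div_nonneg (by linarith) (by linarith)

lemma parrondoUpper_lt_one (ha : 0 < a) (hc : c < 1) : parrondoUpper a c < 1 :=
  (div_lt_one (by linarith)).2 (by linarith)

lemma parrondoGap_eq (hc : c < a + 1) :
    parrondoGap a c = 3 * ((c - a) * ((1 - a) - c)) / (2 * (a + 1 - c) * (a + 4 - c)) := by
  have h₁ : a + (1 - c) ≠ 0 := by linarith
  have h₂ : 3 + a + (1 - c) ≠ 0 := by linarith
  have h₃ : a + 1 - c ≠ 0 := by linarith
  have h₄ : a + 4 - c ≠ 0 := by linarith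
  unfold parrondoGap parrondoUpper parrondoLower
  field_simp
  ring

lemma parrondoGap_nonneg (hc : c < a + 1) (hc' : c ∈ uIcc a (1 - a)) : 0 ≤ parrondoGap a c := by
  rw [parrondoGap_eq hc]
  have := sub_mul_sub_nonneg_of_mem_uIcc hc'
  apply div_nonneg <;> nlinarith

lemma parrondoGap_nonpos (hc : c < a + 1) (hc' : c ∉ Ι a (1 - a)) : parrondoGap a c ≤ 0 := by
  rw [parrondoGap_eq hc]
  have := sub_mul_sub_nonpos_of_notMem_uIoc hc'
  apply div_nonpos_of_nonpos_of_nonneg <;> nlinarith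

lemma continuousOn_parrondoGap : ContinuousOn (parrondoGap a) (Iio (a + 1)) := by
  intro c hc
  have hc : c < a + 1 := hc
  unfold parrondoGap parrondoUpper parrondoLower
  fun_prop (disch := linarith)

lemma hasDerivAt_parrondoGapPrimitive (hc : c < a + 1) :
    HasDerivAt (parrondoGapPrimitive a) (parrondoGap a c) c := by
  have h₁ : a + 1 - c ≠ 0 := by linarith
  have h₄ : a + 4 - c ≠ 0 := by linarith
  have H := (((((hasDerivAt_id' c).const_sub (a + 1)).const_mul 3).add
      ((((hasDerivAt_id' c).const_sub (a + 1)).log h₁).const_mul (2 * a))).sub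
      ((((hasDerivAt_id' c).const_sub (a + 4)).log h₄).const_mul (12 + 8 * a))).div_const 2
  refine H.congr_deriv ?_
  rw [parrondoGap_eq hc]
  field_simp
  ring

lemma uIcc_subset_Iio_add_one (ha : 0 < a) : uIcc a (1 - a) ⊆ Iio (a + 1) :=
  fun _ hc => hc.2.trans_lt (max_lt (by linarith) (by linarith))

lemma integral_parrondoGap (ha : 0 < a) :
    ∫ c in a..(1 - a), parrondoGap a c = parrondoGapIntegral a := by
  have hsub := uIcc_subset_Iio_add_one ha
  rw [intervalIntegral.integral_eq_sub_of_hasDerivAt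
    (fun c hc => hasDerivAt_parrondoGapPrimitive (hsub hc))
    (continuousOn_parrondoGap.mono hsub).intervalIntegrable]
  have e₁ : a + 1 - (1 - a) = 2 * a := by ring
  have e₂ : a + 4 - (1 - a) = 2 * a + 3 := by ring
  have e₃ : a + 1 - a = 1 := by ring
  have e₄ : a + 4 - a = 4 := by ring
  rw [parrondoGapPrimitive, parrondoGapPrimitive, e₁, e₂, e₃, e₄, Real.log_one,
    parrondoGapIntegral]
  ring

lemma lintegral_ofReal_parrondoGap (ha : a ∈ Ioo 0 1) :
    ∫⁻ c in Ioo 0 1, ENNReal.ofReal (parrondoGap a c) =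
      ENNReal.ofReal |parrondoGapIntegral a| := by
  obtain ⟨ha₀, ha₁⟩ := ha
  have hsub := uIcc_subset_Iio_add_one ha₀
  rw [← integral_parrondoGap ha₀]
  refine setLIntegral_ofReal_eq_abs_intervalIntegral measurableSet_Ioo ?_
    (continuousOn_parrondoGap.mono hsub).intervalIntegrable
    (fun c hc => parrondoGap_nonneg (hsub (uIoc_subset_uIcc hc)) (uIoc_subset_uIcc hc))
    (fun c hc hc' => parrondoGap_nonpos (by linarith [hc.2]) hc')
  exact fun c hc => ⟨(lt_min ha₀ (by linarith)).trans hc.1,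
    hc.2.trans_lt (max_lt ha₁ (by linarith))⟩

lemma parrondoGapIntegral_nonneg (ha₀ : 0 < a) (ha₁ : a ≤ 1 / 2) :
    0 ≤ parrondoGapIntegral a := by
  rw [← integral_parrondoGap ha₀]
  refine intervalIntegral.integral_nonneg (by linarith) fun c hc => ?_
  have hc' : c ∈ uIcc a (1 - a) := Icc_subset_uIcc hc
  exact parrondoGap_nonneg (uIcc_subset_Iio_add_one ha₀ hc') hc'

lemma parrondoGapIntegral_nonpos (ha₀ : 1 / 2 ≤ a) : parrondoGapIntegral a ≤ 0 := by
  rw [← integral_parrondoGap (by linarith), intervalIntegral.integral_symm, neg_nonpos]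
  refine intervalIntegral.integral_nonneg (by linarith) fun c hc => ?_
  have hc' : c ∈ uIcc a (1 - a) := Icc_subset_uIcc' hc
  exact parrondoGap_nonneg (uIcc_subset_Iio_add_one (by linarith) hc') hc'

end Gap

lemma continuousOn_parrondoGapIntegral : ContinuousOn parrondoGapIntegral (Ici 0) := by
  intro a ha
  have ha : 0 ≤ a := ha
  have hlog : Continuous fun a : ℝ => 2 * a * Real.log (2 * a) :=
    Real.Continuous.mul_log (continuous_const_mul 2)
  unfold parrondoGapIntegral
  fun_prop (disch := positivity)

lemma continuousOn_parrondoGapIntegralPrimitive :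
    ContinuousOn parrondoGapIntegralPrimitive (Ici 0) := by
  intro t ht
  have ht : 0 ≤ t := ht
  have hlog : Continuous fun t : ℝ => t ^ 2 * Real.log (2 * t) :=
    ((continuous_id.div_const 2).mul (Real.Continuous.mul_log (continuous_const_mul 2))).congr
      fun t => by
        simp only [Pi.mul_apply, id]
        ring
  unfold parrondoGapIntegralPrimitive
  fun_prop (disch := positivity)

lemma hasDerivAt_parrondoGapIntegralPrimitive {t : ℝ} (ht : 0 < t) :
    HasDerivAt parrondoGapIntegralPrimitive (parrondoGapIntegral t) t := by
  have h₂ : 2 * t ≠ 0 := by positivity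
  have h₃ : 2 * t + 3 ≠ 0 := by positivity
  have hlin : HasDerivAt (fun x => 2 * x) 2 t := by
    simpa using (hasDerivAt_id' t).const_mul (2 : ℝ)
  have hlin₃ := hlin.add_const 3
  have hsq := hasDerivAt_pow 2 t
  have hA := (hasDerivAt_id' t).const_mul (-3 : ℝ)
  have hB := hsq.const_mul (3 : ℝ)
  have hC := (((hasDerivAt_id' t).const_mul (12 : ℝ)).add (hsq.const_mul 4)).mul_const
    (Real.log 4)
  have hD := hsq.mul (hlin.log h₂)
  have hE := hsq.div_const 2
  have hF := (hlin₃.pow 2).mul (hlin₃.log h₃)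
  have hG := (hlin₃.pow 2).div_const 2
  have H := ((((((hA.add hB).add hC).add hD).sub hE).sub hF).add hG).div_const 2
  refine H.congr_deriv ?_
  simp only [Pi.pow_apply, parrondoGapIntegral]
  field_simp
  ring

lemma integral_abs_parrondoGapIntegral :
    ∫ a in (0 : ℝ)..1, |parrondoGapIntegral a| =
      (100 * Real.log 5 + 36 * Real.log 3 - 276 * Real.log 2 - 9) / 8 := by
  have hsub {x y : ℝ} (hx : 0 ≤ x) : Icc x y ⊆ Ici 0 := fun _ h => hx.trans h.1
  have hint {x y : ℝ} (hx : 0 ≤ x) (hxy : x ≤ y) :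
      IntervalIntegrable parrondoGapIntegral volume x y :=
    (continuousOn_parrondoGapIntegral.mono (uIcc_of_le hxy ▸ hsub hx)).intervalIntegrable
  have hftc {x y : ℝ} (hx : 0 ≤ x) (hxy : x ≤ y) :
      ∫ a in x..y, parrondoGapIntegral a =
        parrondoGapIntegralPrimitive y - parrondoGapIntegralPrimitive x :=
    intervalIntegral.integral_eq_sub_of_hasDerivAt_of_le hxy
      (continuousOn_parrondoGapIntegralPrimitive.mono (hsub hx))
      (fun t ht => hasDerivAt_parrondoGapIntegralPrimitive (hx.trans_lt ht.1)) (hint hx hxy)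
  rw [intervalIntegral_abs_eq_sub_of_nonneg_of_nonpos (b := 1 / 2) (by norm_num) (by norm_num)
    (hint le_rfl (by norm_num)) (hint (by norm_num) (by norm_num))
    (fun a ha => parrondoGapIntegral_nonneg ha.1 ha.2.le)
    (fun a ha => parrondoGapIntegral_nonpos ha.1.le),
    hftc le_rfl (by norm_num), hftc (by norm_num) (by norm_num)]
  have hlog₄ : Real.log 4 = 2 * Real.log 2 := by
    rw [show (4 : ℝ) = 2 ^ 2 by norm_num, Real.log_pow, Nat.cast_ofNat]
  norm_num [parrondoGapIntegralPrimitive, hlog₄]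
  ring

lemma lintegral_ofReal_abs_parrondoGapIntegral :
    ∫⁻ a in Ioo 0 1, ENNReal.ofReal |parrondoGapIntegral a| =
      ENNReal.ofReal ((100 * Real.log 5 + 36 * Real.log 3 - 276 * Real.log 2 - 9) / 8) := by
  have hint : IntegrableOn (fun a => |parrondoGapIntegral a|) (Ioo 0 1) :=
    ((continuousOn_parrondoGapIntegral.mono Icc_subset_Ici_self).abs.integrableOn_Icc).mono_set
      Ioo_subset_Icc_self
  rw [← ofReal_integral_eq_lintegral_ofReal hint (ae_of_all _ fun _ => abs_nonneg _),
    ← integral_Ioc_eq_integral_Ioo, ← intervalIntegral.integral_of_le zero_le_one,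
    integral_abs_parrondoGapIntegral]

lemma prodAssoc_preimage_parrondoRegion :
    MeasurableEquiv.prodAssoc ⁻¹' parrondoRegion =
      {q : (ℝ × ℝ) × ℝ | q.1 ∈ Ioo 0 1 ×ˢ Ioo 0 1 ∧
        q.2 ∈ Ioc (parrondoLower q.1.1 q.1.2) (parrondoUpper q.1.1 q.1.2)} := by
  ext ⟨⟨a, c⟩, z⟩
  change ((a ∈ Ioo 0 1 ∧ c ∈ Ioo 0 1 ∧ z ∈ Ioo 0 1) ∧ parrondoLower a c < z ∧
    z ≤ parrondoUpper a c) ↔ (a ∈ Ioo 0 1 ∧ c ∈ Ioo 0 1) ∧ parrondoLower a c < z ∧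
    z ≤ parrondoUpper a c
  refine ⟨fun ⟨⟨ha, hc, _⟩, hz⟩ => ⟨⟨ha, hc⟩, hz⟩, fun ⟨⟨ha, hc⟩, hz⟩ => ⟨⟨ha, hc, ?_⟩, hz⟩⟩
  exact ⟨(parrondoLower_nonneg ha.1.le ha.2.le hc.2.le).trans_lt hz.1,
    hz.2.trans_lt (parrondoUpper_lt_one ha.1 hc.2)⟩

lemma volume_parrondoRegion :
    volume parrondoRegion =
      ∫⁻ a in Ioo 0 1, ∫⁻ c in Ioo 0 1, ENNReal.ofReal (parrondoGap a c) := by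
  rw [← (volume_preserving_prodAssoc (α₁ := ℝ) (β₁ := ℝ) (γ₁ := ℝ)).measure_preimage_equiv,
    prodAssoc_preimage_parrondoRegion, Measure.volume_eq_prod,
    volume_regionBetween_Ioc_eq_lintegral (f := fun p => parrondoLower p.1 p.2)
      (g := fun p => parrondoUpper p.1 p.2) (by unfold parrondoLower; fun_prop)
      (by unfold parrondoUpper; fun_prop) (measurableSet_Ioo.prod measurableSet_Ioo),
    Measure.volume_eq_prod,
    setLIntegral_prod _ (by unfold parrondoUpper parrondoLower; fun_prop)]
  rfl

/-- For `N = 3` and `p_1 = p_2`, the volume of the Parrondo region for the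
pattern `[1,1]`, namely the set of `(p_0,p_3,p_1) ∈ (0,1)^3` with
`(3q_0 + 5q_3)/(2(3 + p_0 + q_3)) < p_1 ≤ q_3/(p_0 + q_3)` (`q_m := 1 − p_m`), equals
`(100 ln 5 + 36 ln 3 − 276 ln 2 − 9)/8`. -/
theorem stmt_17 :
    volume {v : ℝ × ℝ × ℝ |
        (v.1 ∈ Set.Ioo (0 : ℝ) 1 ∧ v.2.1 ∈ Set.Ioo (0 : ℝ) 1 ∧
          v.2.2 ∈ Set.Ioo (0 : ℝ) 1) ∧
        (3 * (1 - v.1) + 5 * (1 - v.2.1)) / (2 * (3 + v.1 + (1 - v.2.1))) < v.2.2 ∧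
        v.2.2 ≤ (1 - v.2.1) / (v.1 + (1 - v.2.1))} =
      ENNReal.ofReal
        ((100 * Real.log 5 + 36 * Real.log 3 - 276 * Real.log 2 - 9) / 8) := by
  change volume parrondoRegion = _
  rw [volume_parrondoRegion, setLIntegral_congr_fun measurableSet_Ioo fun a ha =>
    lintegral_ofReal_parrondoGap ha, lintegral_ofReal_abs_parrondoGapIntegral]
end

section
/- The conditions max(|p_0−p_1|, |p_2−p_3|) + max(|p_0−p_2|, |p_1−p_3|) < 1 and 0 < min(p_0,p_3) ≤ min(p_1,p_2) ≤ max(p_1,p_2) ≤ max(p_0,p_3) < 1, restricted to the slice p_1 = p_2, define subsets of the (p_0,p_1,p_3) unit cube (0,1)^3 of Lebesgue measure 7/12 and 1/3, respectively. -/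
open MeasureTheory Set

/-! Both volumes are computed by Fubini, slicing along the coordinate `p₁`.
For the first set the condition says `|p₀ - p₁| < 1/2` and `|p₃ - p₁| < 1/2`, so the slice over
`p₁` is the square on `(0,1) ∩ (p₁ - 1/2, p₁ + 1/2)`, of side `1/2 + min(p₁, 1 - p₁)`; integrating
its area over `p₁` gives `7/12`. For the second set `p₁` ranges over the segment between `p₀` and
`p₃`, so the volume is `∫∫_{(0,1)²} |p₃ - p₀| = ∫₀¹ (p₀² - p₀ + 1/2) dp₀ = 1/3`. -/

section LeftComm

variable {α β γ : Type*} [MeasurableSpace α] [MeasurableSpace β] [MeasurableSpace γ]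
  (μ : Measure α) (ν : Measure β) (ρ : Measure γ) [SFinite μ] [SFinite ν] [SFinite ρ]

theorem MeasureTheory.measurePreserving_prod_left_comm :
    MeasurePreserving (fun v : β × α × γ => (v.2.1, v.1, v.2.2))
      (ν.prod (μ.prod ρ)) (μ.prod (ν.prod ρ)) :=
  (measurePreserving_prodAssoc μ ν ρ).comp <|
    (Measure.measurePreserving_swap.prod (MeasurePreserving.id ρ)).comp
      (measurePreserving_prodAssoc ν μ ρ).symm

variable {μ ν ρ}

theorem MeasureTheory.Measure.prod_prod_apply_eq_lintegral_mid {S : Set (α × β × γ)}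
    (hS : MeasurableSet S) :
    μ.prod (ν.prod ρ) S = ∫⁻ y, μ.prod ρ {p | (p.1, y, p.2) ∈ S} ∂ν := by
  rw [← (measurePreserving_prod_left_comm μ ν ρ).measure_preimage hS.nullMeasurableSet,
    Measure.prod_apply ((measurePreserving_prod_left_comm μ ν ρ).measurable hS)]
  rfl

theorem MeasureTheory.Measure.prod_prod_apply_eq_lintegral_outer {S : Set (α × β × γ)}
    (hS : MeasurableSet S) :
    μ.prod (ν.prod ρ) S = ∫⁻ p, ν {y | (p.1, y, p.2) ∈ S} ∂(μ.prod ρ) := by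
  rw [← (measurePreserving_prod_left_comm μ ν ρ).measure_preimage hS.nullMeasurableSet,
    Measure.prod_apply_symm ((measurePreserving_prod_left_comm μ ν ρ).measurable hS)]
  rfl

end LeftComm

theorem lintegral_Ioo_ofReal_eq_intervalIntegral {g : ℝ → ℝ} {a b : ℝ} (hab : a ≤ b)
    (hg : ContinuousOn g (Icc a b)) (hg₀ : ∀ t ∈ Ioo a b, 0 ≤ g t) :
    ∫⁻ t in Ioo a b, ENNReal.ofReal (g t) = ENNReal.ofReal (∫ t in a..b, g t) := by
  rw [intervalIntegral.integral_of_le hab, integral_Ioc_eq_integral_Ioo,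
    ofReal_integral_eq_lintegral_ofReal (hg.integrableOn_Icc.mono_set Ioo_subset_Icc_self)
      (ae_restrict_of_forall_mem measurableSet_Ioo hg₀)]

theorem volume_Ioo_inter_ball_half {t : ℝ} (ht : t ∈ Icc 0 1) :
    volume (Ioo 0 1 ∩ Metric.ball t (1 / 2)) = ENNReal.ofReal (1 / 2 + min t (1 - t)) := by
  rw [Real.ball_eq_Ioo, Ioo_inter_Ioo, Real.volume_Ioo]
  congr 1
  obtain ⟨h₀, h₁⟩ := ht
  rcases le_total t (1 / 2) with h | h
  · rw [max_eq_left (by linarith), min_eq_right (by linarith), min_eq_left (by linarith)]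
    ring
  · rw [max_eq_right (by linarith), min_eq_left (by linarith), min_eq_right (by linarith)]
    ring

theorem integral_sq_half_add_min_sub :
    ∫ t in (0 : ℝ)..1, (1 / 2 + min t (1 - t)) ^ 2 = 7 / 12 := by
  have hint (a b : ℝ) :
      IntervalIntegrable (fun t : ℝ => (1 / 2 + min t (1 - t)) ^ 2) volume a b :=
    (by fun_prop : Continuous fun t : ℝ => (1 / 2 + min t (1 - t)) ^ 2).intervalIntegrable a b
  rw [← intervalIntegral.integral_add_adjacent_intervals (hint 0 (1 / 2)) (hint (1 / 2) 1)]
  have h₁ : ∫ t in (0 : ℝ)..1 / 2, (1 / 2 + min t (1 - t)) ^ 2 =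
      ∫ t in (0 : ℝ)..1 / 2, (1 / 2 + t) ^ 2 :=
    intervalIntegral.integral_congr fun t ht => by
      rw [uIcc_of_le (by norm_num)] at ht
      simp only [min_eq_left (by linarith [ht.2] : t ≤ 1 - t)]
  have h₂ : ∫ t in (1 / 2 : ℝ)..1, (1 / 2 + min t (1 - t)) ^ 2 =
      ∫ t in (1 / 2 : ℝ)..1, (3 / 2 - t) ^ 2 :=
    intervalIntegral.integral_congr fun t ht => by
      rw [uIcc_of_le (by norm_num)] at ht
      simp only [min_eq_right (by linarith [ht.1] : 1 - t ≤ t)]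
      ring
  rw [h₁, h₂, intervalIntegral.integral_comp_add_left (fun x => x ^ 2),
    intervalIntegral.integral_comp_sub_left (fun x => x ^ 2)]
  norm_num [integral_pow]

theorem integral_abs_sub_of_mem_Icc {c : ℝ} (hc : c ∈ Icc 0 1) :
    ∫ z in (0 : ℝ)..1, |z - c| = c ^ 2 - c + 1 / 2 := by
  have hint (a b : ℝ) : IntervalIntegrable (fun z : ℝ => |z - c|) volume a b :=
    (by fun_prop : Continuous fun z : ℝ => |z - c|).intervalIntegrable a b
  rw [← intervalIntegral.integral_add_adjacent_intervals (hint 0 c) (hint c 1)]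
  have h₁ : ∫ z in (0 : ℝ)..c, |z - c| = ∫ z in (0 : ℝ)..c, (c - z) :=
    intervalIntegral.integral_congr fun z hz => by
      rw [uIcc_of_le hc.1] at hz
      simp only [abs_of_nonpos (sub_nonpos.2 hz.2), neg_sub]
  have h₂ : ∫ z in c..1, |z - c| = ∫ z in c..1, (z - c) :=
    intervalIntegral.integral_congr fun z hz => by
      rw [uIcc_of_le hc.2] at hz
      simp only [abs_of_nonneg (sub_nonneg.2 hz.1)]
  rw [h₁, h₂, intervalIntegral.integral_comp_sub_left (fun x => x),
    intervalIntegral.integral_comp_sub_right (fun x => x), sub_self, sub_zero, integral_id,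
    integral_id]
  ring

theorem volume_setOf_mem_Ioo_inter_ball_half :
    volume {v : ℝ × ℝ × ℝ | v.2.1 ∈ Ioo 0 1 ∧
      v.1 ∈ Ioo 0 1 ∩ Metric.ball v.2.1 (1 / 2) ∧ v.2.2 ∈ Ioo 0 1 ∩ Metric.ball v.2.1 (1 / 2)} =
      ENNReal.ofReal (7 / 12) := by
  set W : ℝ → Set ℝ := fun t => Ioo 0 1 ∩ Metric.ball t (1 / 2)
  have hS : MeasurableSet {v : ℝ × ℝ × ℝ | v.2.1 ∈ Ioo 0 1 ∧ v.1 ∈ W v.2.1 ∧ v.2.2 ∈ W v.2.1} := by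
    measurability
  have hfiber : ∀ y, volume {p : ℝ × ℝ | y ∈ Ioo 0 1 ∧ p.1 ∈ W y ∧ p.2 ∈ W y} =
      (Ioo 0 1).indicator (fun y => volume (W y) * volume (W y)) y := by
    intro y
    by_cases hy : y ∈ Ioo (0 : ℝ) 1
    · have : {p : ℝ × ℝ | y ∈ Ioo 0 1 ∧ p.1 ∈ W y ∧ p.2 ∈ W y} = W y ×ˢ W y := by
        ext; simp [hy]
      rw [this, Measure.volume_eq_prod, Measure.prod_prod, indicator_of_mem hy]
    · rw [indicator_of_notMem hy]
      convert measure_empty (μ := volume)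
      exact eq_empty_of_forall_notMem fun p h => hy h.1
  rw [Measure.volume_eq_prod, Measure.volume_eq_prod ℝ ℝ,
    Measure.prod_prod_apply_eq_lintegral_mid hS]
  calc
    _ = ∫⁻ y in Ioo 0 1, volume (W y) * volume (W y) := by
      rw [← Measure.volume_eq_prod, ← lintegral_indicator measurableSet_Ioo]
      exact lintegral_congr hfiber
    _ = ∫⁻ y in Ioo 0 1, ENNReal.ofReal ((1 / 2 + min y (1 - y)) ^ 2) :=
      setLIntegral_congr_fun measurableSet_Ioo fun y hy => by
        have : 0 ≤ 1 / 2 + min y (1 - y) := by linarith [lt_min hy.1 (sub_pos.2 hy.2)]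
        rw [volume_Ioo_inter_ball_half (Ioo_subset_Icc_self hy), ← ENNReal.ofReal_mul this, sq]
    _ = ENNReal.ofReal (7 / 12) := by
      rw [lintegral_Ioo_ofReal_eq_intervalIntegral zero_le_one (by fun_prop)
        fun _ _ => sq_nonneg _, integral_sq_half_add_min_sub]

theorem volume_setOf_mem_Icc_min_max :
    volume {v : ℝ × ℝ × ℝ | v.1 ∈ Ioo 0 1 ∧ v.2.2 ∈ Ioo 0 1 ∧
      v.2.1 ∈ Icc (min v.1 v.2.2) (max v.1 v.2.2)} =
      ENNReal.ofReal (1 / 3) := by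
  have hS : MeasurableSet {v : ℝ × ℝ × ℝ | v.1 ∈ Ioo 0 1 ∧ v.2.2 ∈ Ioo 0 1 ∧
      v.2.1 ∈ Icc (min v.1 v.2.2) (max v.1 v.2.2)} := by
    measurability
  have hfiber : ∀ p : ℝ × ℝ,
      volume {y | p.1 ∈ Ioo 0 1 ∧ p.2 ∈ Ioo 0 1 ∧ y ∈ Icc (min p.1 p.2) (max p.1 p.2)} =
      (Ioo 0 1 ×ˢ Ioo 0 1).indicator (fun p => ENNReal.ofReal |p.2 - p.1|) p := by
    intro p
    by_cases hp : p ∈ Ioo (0 : ℝ) 1 ×ˢ Ioo 0 1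
    · have : {y | p.1 ∈ Ioo 0 1 ∧ p.2 ∈ Ioo 0 1 ∧ y ∈ Icc (min p.1 p.2) (max p.1 p.2)} =
          Icc (min p.1 p.2) (max p.1 p.2) := by
        ext; simp [hp.1, hp.2]
      rw [this, indicator_of_mem hp, Real.volume_Icc, max_sub_min_eq_abs]
    · rw [indicator_of_notMem hp]
      convert measure_empty (μ := volume)
      exact eq_empty_of_forall_notMem fun y h => hp ⟨h.1, h.2.1⟩
  rw [Measure.volume_eq_prod, Measure.volume_eq_prod ℝ ℝ,
    Measure.prod_prod_apply_eq_lintegral_outer hS]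
  calc
    _ = ∫⁻ p in Ioo 0 1 ×ˢ Ioo 0 1, ENNReal.ofReal |p.2 - p.1| ∂(volume.prod volume) := by
      rw [← lintegral_indicator (measurableSet_Ioo.prod measurableSet_Ioo)]
      exact lintegral_congr hfiber
    _ = ∫⁻ x in Ioo 0 1, ∫⁻ z in Ioo 0 1, ENNReal.ofReal |z - x| := by
      rw [← Measure.prod_restrict, lintegral_prod _ (by fun_prop)]
    _ = ∫⁻ x in Ioo 0 1, ENNReal.ofReal (x ^ 2 - x + 1 / 2) :=
      setLIntegral_congr_fun measurableSet_Ioo fun x hx => by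
        rw [lintegral_Ioo_ofReal_eq_intervalIntegral zero_le_one (by fun_prop)
          fun _ _ => abs_nonneg _, integral_abs_sub_of_mem_Icc (Ioo_subset_Icc_self hx)]
    _ = ENNReal.ofReal (1 / 3) := by
      rw [lintegral_Ioo_ofReal_eq_intervalIntegral zero_le_one (by fun_prop)
        fun t _ => by nlinarith [sq_nonneg (t - 1 / 2)]]
      norm_num [integral_pow]

/-- In the `(p_0,p_1,p_3)` unit cube `(0,1)^3` (slice `p_1 = p_2`), the
ergodicity condition `max(|p_0−p_1|, |p_2−p_3|) + max(|p_0−p_2|, |p_1−p_3|) < 1` defines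
a set of Lebesgue measure `7/12`, and the condition
`0 < min(p_0,p_3) ≤ min(p_1,p_2) ≤ max(p_1,p_2) ≤ max(p_0,p_3) < 1` defines a set of
Lebesgue measure `1/3`.  (Coordinates: `v = (p_0, p_1, p_3)` with `p_2 = p_1`.) -/
theorem stmt_19 :
    volume {v : ℝ × ℝ × ℝ |
        (v.1 ∈ Set.Ioo (0 : ℝ) 1 ∧ v.2.1 ∈ Set.Ioo (0 : ℝ) 1 ∧
          v.2.2 ∈ Set.Ioo (0 : ℝ) 1) ∧
        max |v.1 - v.2.1| |v.2.1 - v.2.2| + max |v.1 - v.2.1| |v.2.1 - v.2.2| < 1} =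
      ENNReal.ofReal (7 / 12) ∧
    volume {v : ℝ × ℝ × ℝ |
        (v.1 ∈ Set.Ioo (0 : ℝ) 1 ∧ v.2.1 ∈ Set.Ioo (0 : ℝ) 1 ∧
          v.2.2 ∈ Set.Ioo (0 : ℝ) 1) ∧
        0 < min v.1 v.2.2 ∧ min v.1 v.2.2 ≤ v.2.1 ∧ v.2.1 ≤ max v.1 v.2.2 ∧
          max v.1 v.2.2 < 1} =
      ENNReal.ofReal (1 / 3) := by
  have max_add_self_lt_one (a b : ℝ) : max a b + max a b < 1 ↔ a < 1 / 2 ∧ b < 1 / 2 := by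
    rw [← max_lt_iff]
    constructor <;> intro <;> linarith
  constructor
  · convert volume_setOf_mem_Ioo_inter_ball_half using 3
    ext ⟨x, y, z⟩
    simp only [mem_inter_iff, Metric.mem_ball, Real.dist_eq, abs_sub_comm y z,
      max_add_self_lt_one]
    tauto
  · convert volume_setOf_mem_Icc_min_max using 3
    ext ⟨x, y, z⟩
    simp only [mem_Ioo, mem_Icc, lt_min_iff, max_lt_iff]
    constructor
    · tauto
    · rintro ⟨hx, hz, hmin, hmax⟩
      exact ⟨⟨hx, ⟨(lt_min hx.1 hz.1).trans_le hmin, hmax.trans_lt (max_lt hx.2 hz.2)⟩, hz⟩,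
        ⟨hx.1, hz.1⟩, hmin, hmax, hx.2, hz.2⟩
end
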